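/- For k ∈ ℕ define G_k(γ) := ∫_ℝ x^k e^{−(x² + γ² x⁴)} dx. If γ > 0 satisfies γ²(2k+1)(2k+3) < 4, then 1 − γ²(2k+1)(2k+3)/4 ≤ G_{2k}(γ)/G_{2k}(0) ≤ 1. -/
import Mathlib

open MeasureTheory Real Set

/-- `G_k(γ) := ∫_ℝ x^k e^{−(x² + γ² x⁴)} dx`. -/
noncomputable def Gk (k : ℕ) (γ : ℝ) : ℝ :=
  ∫ x : ℝ, x ^ k * Real.exp (-(x ^ 2 + γ ^ 2 * x ^ 4))

lemma int_pow_gauss (n : ℕ) :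
    Integrable fun x : ℝ => x ^ n * Real.exp (-x ^ 2) := by
  have h := integrable_rpow_mul_exp_neg_mul_sq (b := 1) one_pos
    (s := (n : ℝ)) (by exact lt_of_lt_of_le (by norm_num) (Nat.cast_nonneg n))
  simpa [Real.rpow_natCast, neg_mul, one_mul] using h

lemma gauss_moment (n : ℕ) :
    ∫ x : ℝ, x ^ (2 * n) * Real.exp (-x ^ 2) = Real.Gamma ((n : ℝ) + 1 / 2) := by
  have heven : ∀ x : ℝ, x ^ (2 * n) * Real.exp (-x ^ 2)
      = |x| ^ (2 * n) * Real.exp (-|x| ^ 2) := by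
    intro x
    rw [(even_two_mul n).pow_abs, sq_abs]
  calc ∫ x : ℝ, x ^ (2 * n) * Real.exp (-x ^ 2)
      = ∫ x : ℝ, (fun t : ℝ => t ^ (2 * n) * Real.exp (-t ^ 2)) |x| := by
        exact integral_congr_ae (Filter.Eventually.of_forall fun x => heven x)
    _ = 2 * ∫ x in Ioi (0 : ℝ), x ^ (2 * n) * Real.exp (-x ^ 2) :=
        _root_.integral_comp_abs (f := fun t : ℝ => t ^ (2 * n) * Real.exp (-t ^ 2))
    _ = Real.Gamma ((n : ℝ) + 1 / 2) := by
        have h := integral_rpow_mul_exp_neg_rpow (p := 2) (q := (2 * n : ℝ))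
          two_pos (by have := Nat.cast_nonneg (α := ℝ) n; linarith)
        have hconv : ∀ x ∈ Ioi (0 : ℝ),
            x ^ ((2 * n : ℕ) : ℝ) * Real.exp (-x ^ (2 : ℝ))
              = x ^ (2 * n) * Real.exp (-x ^ 2) := by
          intro x _
          rw [Real.rpow_natCast, Real.rpow_two]
        rw [← setIntegral_congr_fun measurableSet_Ioi hconv]
        push_cast at h ⊢
        rw [h]
        ring_nf

lemma gauss_moment_pos (n : ℕ) :
    0 < ∫ x : ℝ, x ^ (2 * n) * Real.exp (-x ^ 2) := by
  rw [gauss_moment]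
  exact Real.Gamma_pos_of_pos (by positivity)

lemma gauss_moment_succ2 (n : ℕ) :
    ∫ x : ℝ, x ^ (2 * (n + 2)) * Real.exp (-x ^ 2)
      = (2 * (n : ℝ) + 1) * (2 * (n : ℝ) + 3) / 4
        * ∫ x : ℝ, x ^ (2 * n) * Real.exp (-x ^ 2) := by
  rw [gauss_moment, gauss_moment]
  push_cast
  have h1 : ((n : ℝ) + 2 + 1 / 2) = ((n : ℝ) + 1 / 2 + 1) + 1 := by ring
  rw [h1, Real.Gamma_add_one (by positivity), Real.Gamma_add_one (by positivity)]
  ring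

lemma integrable_Gk (k : ℕ) (γ : ℝ) :
    Integrable fun x : ℝ => x ^ (2 * k) * Real.exp (-(x ^ 2 + γ ^ 2 * x ^ 4)) := by
  refine (int_pow_gauss (2 * k)).mono' ?_ ?_
  · apply Measurable.aestronglyMeasurable
    fun_prop
  · filter_upwards with x
    rw [Real.norm_eq_abs, abs_mul, abs_of_nonneg (Real.exp_pos _).le,
      abs_of_nonneg ((even_two_mul k).pow_nonneg x)]
    exact mul_le_mul_of_nonneg_left
      (Real.exp_le_exp.mpr (by nlinarith [sq_nonneg (γ * x ^ 2)]))
      ((even_two_mul k).pow_nonneg x)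

theorem stmt16 (k : ℕ) (γ : ℝ) (hγ : 0 < γ)
    (h : γ ^ 2 * (2 * (k : ℝ) + 1) * (2 * (k : ℝ) + 3) < 4) :
    1 - γ ^ 2 * (2 * (k : ℝ) + 1) * (2 * (k : ℝ) + 3) / 4 ≤ Gk (2 * k) γ / Gk (2 * k) 0 ∧
      Gk (2 * k) γ / Gk (2 * k) 0 ≤ 1 := by
  have hM0 : Gk (2 * k) 0 = ∫ x : ℝ, x ^ (2 * k) * Real.exp (-x ^ 2) := by
    unfold Gk
    norm_num
  have hMpos : 0 < Gk (2 * k) 0 := hM0 ▸ gauss_moment_pos k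
  have hint := integrable_Gk k γ
  have hintg := int_pow_gauss (2 * k)
  -- upper bound
  have hupper : Gk (2 * k) γ ≤ Gk (2 * k) 0 := by
    rw [hM0]
    unfold Gk
    refine integral_mono hint hintg fun x => ?_
    exact mul_le_mul_of_nonneg_left
      (Real.exp_le_exp.mpr (by nlinarith [sq_nonneg (γ * x ^ 2)]))
      ((even_two_mul k).pow_nonneg x)
  -- lower bound
  have hlower : Gk (2 * k) 0 - γ ^ 2 * (2 * (k : ℝ) + 1) * (2 * (k : ℝ) + 3) / 4
      * Gk (2 * k) 0 ≤ Gk (2 * k) γ := by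
    have hkey : ∀ x : ℝ,
        x ^ (2 * k) * Real.exp (-x ^ 2) - γ ^ 2 * (x ^ (2 * (k + 2)) * Real.exp (-x ^ 2))
          ≤ x ^ (2 * k) * Real.exp (-(x ^ 2 + γ ^ 2 * x ^ 4)) := by
      intro x
      have hexp : (1 - γ ^ 2 * x ^ 4) * Real.exp (-x ^ 2)
          ≤ Real.exp (-(x ^ 2 + γ ^ 2 * x ^ 4)) := by
        have h1 : (1 - γ ^ 2 * x ^ 4) ≤ Real.exp (-(γ ^ 2 * x ^ 4)) := by
          have := Real.add_one_le_exp (-(γ ^ 2 * x ^ 4))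
          linarith
        calc (1 - γ ^ 2 * x ^ 4) * Real.exp (-x ^ 2)
            ≤ Real.exp (-(γ ^ 2 * x ^ 4)) * Real.exp (-x ^ 2) := by
              exact mul_le_mul_of_nonneg_right h1 (Real.exp_pos _).le
          _ = Real.exp (-(x ^ 2 + γ ^ 2 * x ^ 4)) := by
              rw [← Real.exp_add]; ring_nf
      have hx : (0 : ℝ) ≤ x ^ (2 * k) := (even_two_mul k).pow_nonneg x
      calc x ^ (2 * k) * Real.exp (-x ^ 2)
            - γ ^ 2 * (x ^ (2 * (k + 2)) * Real.exp (-x ^ 2))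
          = x ^ (2 * k) * ((1 - γ ^ 2 * x ^ 4) * Real.exp (-x ^ 2)) := by ring
        _ ≤ x ^ (2 * k) * Real.exp (-(x ^ 2 + γ ^ 2 * x ^ 4)) := by
            exact mul_le_mul_of_nonneg_left hexp hx
    have hi1 : Integrable fun x : ℝ =>
        x ^ (2 * k) * Real.exp (-x ^ 2) - γ ^ 2 * (x ^ (2 * (k + 2)) * Real.exp (-x ^ 2)) :=
      (int_pow_gauss (2 * k)).sub ((int_pow_gauss (2 * (k + 2))).const_mul _)
    have hmono : ∫ x : ℝ, (x ^ (2 * k) * Real.exp (-x ^ 2)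
        - γ ^ 2 * (x ^ (2 * (k + 2)) * Real.exp (-x ^ 2))) ≤ Gk (2 * k) γ := by
      unfold Gk
      exact integral_mono hi1 hint hkey
    rw [integral_sub (int_pow_gauss (2 * k)) ((int_pow_gauss (2 * (k + 2))).const_mul _),
      integral_const_mul _ _, gauss_moment_succ2] at hmono
    rw [hM0]
    calc (∫ x : ℝ, x ^ (2 * k) * Real.exp (-x ^ 2))
          - γ ^ 2 * (2 * (k : ℝ) + 1) * (2 * (k : ℝ) + 3) / 4
            * ∫ x : ℝ, x ^ (2 * k) * Real.exp (-x ^ 2)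
        = (∫ x : ℝ, x ^ (2 * k) * Real.exp (-x ^ 2))
          - γ ^ 2 * ((2 * (k : ℝ) + 1) * (2 * (k : ℝ) + 3) / 4
            * ∫ x : ℝ, x ^ (2 * k) * Real.exp (-x ^ 2)) := by ring
      _ ≤ Gk (2 * k) γ := hmono
  constructor
  · rw [le_div_iff₀ hMpos]
    nlinarith
  · rw [div_le_one hMpos]
    exact hupper
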